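/- arXiv:1409.5834 — 2 statements merged into one kernel-verified Lean document; each statement's English description precedes it below -/
import Mathlib

section
/- Flipping Lemma: Let G = (V,E) be a finite graph, y : V → {−1,+1} a ground truth, X : E → {−1,+1} edge observations, and let Ŷ ∈ {−1,+1}^V maximize Σ_{uv∈E} X_uv·Y_u·Y_v over all Y ∈ {−1,+1}^V. Let S ⊆ V be a nonempty set such that the induced subgraph G[S] is connected, Ŷ_v ≠ y_v for every v ∈ S, and S is maximal with these properties (equivalently, every vertex adjacent to S satisfies Ŷ_v = y_v). Then at least half of the edges of δ(S) are bad, i.e. #{uv ∈ δ(S) : X_uv ≠ y_u·y_v} ≥ |δ(S)|/2. -/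
/-!
Flip the sign of `Ŷ` on all of `S`. This changes `Ŷ_u Ŷ_v` exactly on the boundary edges, so
optimality of `Ŷ` gives `∑_{e ∈ δ(S)} X_e Ŷ_u Ŷ_v ≥ 0`. On a boundary edge `Ŷ` is wrong at the
inner endpoint and right at the outer one, so `Ŷ_u Ŷ_v = -y_u y_v`, i.e. `∑_{δ(S)} X_e y_u y_v ≤ 0`.
That sum is (#good edges) − (#bad edges).
-/

open Finset

def IsSign (x : ℤ) : Prop := x = 1 ∨ x = -1

def pairProd {V : Type*} (y : V → ℤ) : Sym2 V → ℤ :=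
  Sym2.lift ⟨fun u v => y u * y v, fun u v => mul_comm (y u) (y v)⟩

variable {V : Type*} [Fintype V] [DecidableEq V]

/-- The boundary `δ(S)`: edges of `G` with exactly one endpoint in `S`. -/
def bdry (G : SimpleGraph V) [DecidableRel G.Adj] (S : Finset V) : Finset (Sym2 V) :=
  G.edgeFinset.filter fun e => ∃ u v : V, e = s(u, v) ∧ u ∈ S ∧ v ∉ S

/-- `Yh` is a `±1` labeling maximizing `∑_{uv ∈ E} X_uv Y_u Y_v` over `±1` labelings,
for edge observations given on all of `Sym2 V` (only values on edges matter). -/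
def Maximizes (G : SimpleGraph V) [DecidableRel G.Adj] (X : Sym2 V → ℤ)
    (Yh : V → ℤ) : Prop :=
  (∀ v, IsSign (Yh v)) ∧
  ∀ Y : V → ℤ, (∀ v, IsSign (Y v)) →
    (∑ e ∈ G.edgeFinset, X e * pairProd Y e) ≤ ∑ e ∈ G.edgeFinset, X e * pairProd Yh e

namespace IsSign

lemma neg {x : ℤ} (h : IsSign x) : IsSign (-x) := by
  rcases h with rfl | rfl <;> simp [IsSign]

lemma mul {x z : ℤ} (hx : IsSign x) (hz : IsSign z) : IsSign (x * z) := by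
  rcases hx with rfl | rfl <;> rcases hz with rfl | rfl <;> simp [IsSign]

lemma eq_neg_of_ne {x z : ℤ} (hx : IsSign x) (hz : IsSign z) (h : x ≠ z) : x = -z := by
  rcases hx with rfl | rfl <;> rcases hz with rfl | rfl <;> simp_all

lemma mul_eq_one_sub_two_mul_ite {x z : ℤ} (hx : IsSign x) (hz : IsSign z) :
    x * z = 1 - 2 * if x ≠ z then 1 else 0 := by
  rcases hx with rfl | rfl <;> rcases hz with rfl | rfl <;> simp

end IsSign

lemma isSign_pairProd {α : Type*} {y : α → ℤ} (hy : ∀ v, IsSign (y v)) (e : Sym2 α) :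
    IsSign (pairProd y e) := by
  induction e using Sym2.ind with
  | _ u v => exact (hy u).mul (hy v)

lemma sum_mul_eq_card_sub_two_mul_card_filter_ne {α : Type*} (B : Finset α) {a b : α → ℤ}
    (ha : ∀ e ∈ B, IsSign (a e)) (hb : ∀ e ∈ B, IsSign (b e)) :
    ∑ e ∈ B, a e * b e = B.card - 2 * (B.filter fun e => a e ≠ b e).card := by
  classical
  rw [sum_congr rfl fun e he => (ha e he).mul_eq_one_sub_two_mul_ite (hb e he),
    sum_sub_distrib, ← mul_sum, sum_boole]
  simp

lemma card_le_two_mul_card_filter_ne_of_sum_mul_nonpos {α : Type*} (B : Finset α)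
    {a b : α → ℤ} (ha : ∀ e ∈ B, IsSign (a e)) (hb : ∀ e ∈ B, IsSign (b e))
    (hsum : ∑ e ∈ B, a e * b e ≤ 0) :
    B.card ≤ 2 * (B.filter fun e => a e ≠ b e).card := by
  rw [sum_mul_eq_card_sub_two_mul_card_filter_ne B ha hb] at hsum
  omega

def flipOn {α : Type*} [DecidableEq α] (S : Finset α) (Y : α → ℤ) (v : α) : ℤ :=
  if v ∈ S then -Y v else Y v

lemma isSign_flipOn {α : Type*} [DecidableEq α] {S : Finset α} {Y : α → ℤ}
    (hY : ∀ v, IsSign (Y v)) (v : α) : IsSign (flipOn S Y v) := by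
  unfold flipOn
  split
  · exact (hY v).neg
  · exact hY v

section Boundary

variable {G : SimpleGraph V} [DecidableRel G.Adj] {S : Finset V}

lemma bdry_subset_edgeFinset : bdry G S ⊆ G.edgeFinset := filter_subset _ _

lemma pairProd_flipOn_of_mem_bdry {Y : V → ℤ} {e : Sym2 V} (he : e ∈ bdry G S) :
    pairProd (flipOn S Y) e = -pairProd Y e := by
  obtain ⟨-, u, v, rfl, hu, hv⟩ := mem_filter.mp he
  simp [pairProd, flipOn, hu, hv]

lemma pairProd_flipOn_of_notMem_bdry (Y : V → ℤ) {e : Sym2 V} (he : e ∈ G.edgeFinset)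
    (hnb : e ∉ bdry G S) : pairProd (flipOn S Y) e = pairProd Y e := by
  induction e using Sym2.ind with
  | _ u v =>
    have hcross : ∀ a b : V, s(u, v) = s(a, b) → a ∈ S → b ∈ S :=
      fun a b hab ha => by_contra fun hb => hnb (mem_filter.mpr ⟨he, a, b, hab, ha, hb⟩)
    by_cases hu : u ∈ S <;> by_cases hv : v ∈ S
    · simp [pairProd, flipOn, hu, hv]
    · exact absurd (hcross u v rfl hu) hv
    · exact absurd (hcross v u Sym2.eq_swap hv) hu
    · simp [pairProd, flipOn, hu, hv]

lemma sum_mul_pairProd_flipOn (X : Sym2 V → ℤ) (Y : V → ℤ) :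
    ∑ e ∈ G.edgeFinset, X e * pairProd (flipOn S Y) e =
      ∑ e ∈ G.edgeFinset, X e * pairProd Y e - 2 * ∑ e ∈ bdry G S, X e * pairProd Y e := by
  have hinner : ∑ e ∈ G.edgeFinset \ bdry G S, X e * pairProd (flipOn S Y) e =
      ∑ e ∈ G.edgeFinset \ bdry G S, X e * pairProd Y e := by
    refine sum_congr rfl fun e he => ?_
    rw [mem_sdiff] at he
    rw [pairProd_flipOn_of_notMem_bdry Y he.1 he.2]
  have hbdry : ∑ e ∈ bdry G S, X e * pairProd (flipOn S Y) e =
      -∑ e ∈ bdry G S, X e * pairProd Y e := by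
    rw [← sum_neg_distrib]
    exact sum_congr rfl fun e he => by rw [pairProd_flipOn_of_mem_bdry he, mul_neg]
  rw [← sum_sdiff bdry_subset_edgeFinset, ← sum_sdiff (bdry_subset_edgeFinset (S := S)),
    hinner, hbdry]
  ring

/-- Flipping `Ŷ` on `S` cannot increase the objective. -/
lemma Maximizes.sum_bdry_nonneg {X : Sym2 V → ℤ} {Yh : V → ℤ} (hmax : Maximizes G X Yh) :
    0 ≤ ∑ e ∈ bdry G S, X e * pairProd Yh e := by
  have := hmax.2 (flipOn S Yh) (isSign_flipOn hmax.1)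
  rw [sum_mul_pairProd_flipOn] at this
  linarith

lemma pairProd_eq_neg_of_mem_bdry {y Yh : V → ℤ} (hy : ∀ v, IsSign (y v))
    (hYh : ∀ v, IsSign (Yh v)) (hwrong : ∀ v ∈ S, Yh v ≠ y v)
    (hmaximal : ∀ u ∈ S, ∀ v, G.Adj u v → v ∉ S → Yh v = y v) {e : Sym2 V}
    (he : e ∈ bdry G S) : pairProd Yh e = -pairProd y e := by
  obtain ⟨heE, u, v, rfl, hu, hv⟩ := mem_filter.mp he
  have hYu : Yh u = -y u := (hYh u).eq_neg_of_ne (hy u) (hwrong u hu)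
  have hYv : Yh v = y v := hmaximal u hu v (G.mem_edgeFinset.mp heE) hv
  simp [pairProd, hYu, hYv]

end Boundary

theorem flipping_lemma_general (G : SimpleGraph V) [DecidableRel G.Adj]
    (y : V → ℤ) (hy : ∀ v, IsSign (y v))
    (X : Sym2 V → ℤ) (hX : ∀ e ∈ G.edgeFinset, IsSign (X e))
    (Yh : V → ℤ) (hmax : Maximizes G X Yh)
    (S : Finset V)
    (hwrong : ∀ v ∈ S, Yh v ≠ y v)
    (hmaximal : ∀ u ∈ S, ∀ v, G.Adj u v → v ∉ S → Yh v = y v) :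
    (bdry G S).card ≤ 2 * ((bdry G S).filter fun e => X e ≠ pairProd y e).card := by
  refine card_le_two_mul_card_filter_ne_of_sum_mul_nonpos _
    (fun e he => hX e (bdry_subset_edgeFinset he)) (fun e _ => isSign_pairProd hy e) ?_
  have hflip : ∑ e ∈ bdry G S, X e * pairProd Yh e = -∑ e ∈ bdry G S, X e * pairProd y e := by
    rw [← sum_neg_distrib]
    exact sum_congr rfl fun e he => by
      rw [pairProd_eq_neg_of_mem_bdry hy hmax.1 hwrong hmaximal he, mul_neg]
  linarith [hmax.sum_bdry_nonneg (S := S), hflip]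

/-- Flipping Lemma: if `S` is a nonempty connected set of vertices all
mislabeled by a maximizer `Ŷ`, and maximal with this property (every vertex adjacent to
`S` is correctly labeled), then at least half of the edges of `δ(S)` are bad. -/
theorem flipping_lemma (G : SimpleGraph V) [DecidableRel G.Adj]
    (y : V → ℤ) (hy : ∀ v, IsSign (y v))
    (X : Sym2 V → ℤ) (hX : ∀ e ∈ G.edgeFinset, IsSign (X e))
    (Yh : V → ℤ) (hmax : Maximizes G X Yh)
    (S : Finset V) (hSne : S.Nonempty)
    (hconn : (G.induce (S : Set V)).Connected)
    (hwrong : ∀ v ∈ S, Yh v ≠ y v)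
    (hmaximal : ∀ u ∈ S, ∀ v, G.Adj u v → v ∉ S → Yh v = y v) :
    (bdry G S).card ≤ 2 * ((bdry G S).filter fun e => X e ≠ pairProd y e).card :=
  flipping_lemma_general G y hy X hX Yh hmax S hwrong hmaximal
end

section
/- Lower bound for grids: For every node noise q ∈ (0, 1/2] there exists a constant c > 0 such that for every edge noise p ∈ (0, 0.078] there exists N₀ such that for all n with n² ≥ N₀ and every function A mapping observations (node and edge labels) of the n×n grid graph to labelings in {−1,+1}^V, there exists a ground truth y : V → {−1,+1} for which the expected Hamming error of A(X) with respect to y (expectation over the random observations X generated from y) is at least c·p²·n². -/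
/-!
Le Cam's two-point argument at every interior vertex `u`. Negating the truth at `u` while flipping
the node observation at `u` and all edge observations at `u` leaves the observations unchanged.
Since `u` has four edges, the event "two of them and the node label at `u` are corrupted, the other
two are not" (probability `q p² (1-p)²`) is mapped by this flip to an event at least as likely, and
no guess of the label at `u` is right under both truths. Hence the expected errors at `u` for `y`
and for `y` negated at `u` add up to at least `q p² (1-p)²`. Averaging over uniformly random signs
`y` and summing over the `(n-2)²` interior vertices gives some `y` with expected error at least
`q p² (1-p)² (n-2)² / 2 ≥ q p² n² / 16`.
-/

open Finset

def gridGraph (n : ℕ) : SimpleGraph (Fin n × Fin n) where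
  Adj u v := (u.1 = v.1 ∧ Nat.dist u.2.val v.2.val = 1) ∨
    (u.2 = v.2 ∧ Nat.dist u.1.val v.1.val = 1)
  symm := by
    constructor
    intro u v h
    rcases h with ⟨h1, h2⟩ | ⟨h1, h2⟩
    · exact Or.inl ⟨h1.symm, by rwa [Nat.dist_comm]⟩
    · exact Or.inr ⟨h1.symm, by rwa [Nat.dist_comm]⟩
  loopless := by
    constructor
    intro u h
    rcases h with ⟨_, h2⟩ | ⟨_, h2⟩ <;> simp [Nat.dist_self] at h2

instance (n : ℕ) : DecidableRel (gridGraph n).Adj := fun u v =>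
  inferInstanceAs (Decidable ((u.1 = v.1 ∧ Nat.dist u.2.val v.2.val = 1) ∨
    (u.2 = v.2 ∧ Nat.dist u.1.val v.1.val = 1)))

variable {V : Type*} [Fintype V] [DecidableEq V]

def hamming (Yh y : V → ℤ) : ℕ := (univ.filter fun v => Yh v ≠ y v).card

/-- Expectation over the random observations generated from ground truth `y` with edge
noise `p` and node noise `q`. -/
noncomputable def expVal (G : SimpleGraph V) [DecidableRel G.Adj] (p q : ℝ) (y : V → ℤ)
    (f : ((G.edgeSet → ℤ) × (V → ℤ)) → ℝ) : ℝ :=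
  ∑ fE : G.edgeSet → Bool, ∑ fV : V → Bool,
    ((∏ e : G.edgeSet, if fE e then p else 1 - p) * ∏ v : V, if fV v then q else 1 - q) *
      f (fun e => (if fE e then -1 else 1) * pairProd y e.val,
         fun v => (if fV v then -1 else 1) * y v)

section FlipPatterns

variable {ι : Type*} {p : ℝ}

def flipProb (p : ℝ) (b : Bool) : ℝ := if b then p else 1 - p

def flipWeight [Fintype ι] (p : ℝ) (f : ι → Bool) : ℝ := ∏ i, flipProb p (f i)

def toggle [DecidableEq ι] (S : Finset ι) (f : ι → Bool) : ι → Bool :=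
  fun i => xor (f i) (decide (i ∈ S))

lemma flipProb_nonneg (hp0 : 0 ≤ p) (hp1 : p ≤ 1) (b : Bool) : 0 ≤ flipProb p b := by
  unfold flipProb; split <;> linarith

lemma flipProb_not (b : Bool) : flipProb p (!b) = flipProb (1 - p) b := by
  cases b <;> simp [flipProb]

lemma flipWeight_nonneg [Fintype ι] (hp0 : 0 ≤ p) (hp1 : p ≤ 1) (f : ι → Bool) :
    0 ≤ flipWeight p f :=
  prod_nonneg fun _ _ => flipProb_nonneg hp0 hp1 _

lemma toggle_involutive [DecidableEq ι] (S : Finset ι) : Function.Involutive (toggle S) := by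
  intro f; funext i; simp [toggle]

lemma flipWeight_le_flipWeight_toggle [Fintype ι] [DecidableEq ι] (hp0 : 0 ≤ p) (hp1 : p ≤ 1)
    {S : Finset ι} {f : ι → Bool}
    (h : ∏ i ∈ S, flipProb p (f i) ≤ ∏ i ∈ S, flipProb p (!f i)) :
    flipWeight p f ≤ flipWeight p (toggle S f) := by
  unfold flipWeight
  rw [← prod_mul_prod_compl S, ← prod_mul_prod_compl S (fun i => flipProb p (toggle S f i))]
  have h_in : ∏ i ∈ S, flipProb p (toggle S f i) = ∏ i ∈ S, flipProb p (!f i) :=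
    prod_congr rfl fun i hi => by simp [toggle, hi]
  have h_out : ∏ i ∈ Sᶜ, flipProb p (toggle S f i) = ∏ i ∈ Sᶜ, flipProb p (f i) :=
    prod_congr rfl fun i hi => by simp [toggle, mem_compl.1 hi]
  rw [h_in, h_out]
  exact mul_le_mul_of_nonneg_right h (prod_nonneg fun _ _ => flipProb_nonneg hp0 hp1 _)

lemma sum_flipWeight_eqOn [Fintype ι] [DecidableEq ι] (S : Finset ι) (t : ι → Bool) :
    ∑ f with ∀ i ∈ S, f i = t i, flipWeight p f = ∏ i ∈ S, flipProb p (t i) := by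
  set g : ι → Bool → ℝ := fun i b => if i ∈ S ∧ b ≠ t i then 0 else flipProb p b
  have hg : ∀ i, ∑ b, g i b = if i ∈ S then flipProb p (t i) else 1 := by
    intro i
    by_cases hi : i ∈ S <;> cases ht : t i <;> simp [g, hi, ht, flipProb]
  calc ∑ f with ∀ i ∈ S, f i = t i, flipWeight p f = ∑ f : ι → Bool, ∏ i, g i (f i) := by
        rw [sum_filter]
        refine sum_congr rfl fun f _ => ?_
        split_ifs with hf
        · exact prod_congr rfl fun i _ => by simp +contextual [g, hf]
        · obtain ⟨i, hi, hne⟩ : ∃ i ∈ S, f i ≠ t i := by simpa using hf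
          exact (prod_eq_zero (mem_univ i) (by simp [g, hi, hne])).symm
    _ = ∏ i, ∑ b, g i b := by rw [Fintype.prod_sum]
    _ = ∏ i ∈ S, flipProb p (t i) := by
        rw [prod_congr rfl fun i _ => hg i, prod_ite_mem, univ_inter]

lemma prod_flipProb_mem [DecidableEq ι] (T S : Finset ι) :
    ∏ i ∈ T, flipProb p (decide (i ∈ S)) = p ^ #(T ∩ S) * (1 - p) ^ #(T \ S) := by
  simp [flipProb, prod_ite, filter_mem_eq_inter, filter_not]

lemma prod_flipProb_mem_of_card_eq_two_mul [DecidableEq ι] {T S : Finset ι} (hST : S ⊆ T)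
    (hT : #T = 2 * #S) :
    ∏ i ∈ T, flipProb p (decide (i ∈ S)) = (p * (1 - p)) ^ #S := by
  rw [prod_flipProb_mem, inter_eq_right.2 hST, card_sdiff_of_subset hST, hT, mul_pow]
  congr 2; omega

def noiseWeight {κ : Type*} [Fintype ι] [Fintype κ] (p q : ℝ) (ω : (ι → Bool) × (κ → Bool)) :
    ℝ :=
  flipWeight p ω.1 * flipWeight q ω.2

lemma noiseWeight_nonneg {κ : Type*} [Fintype ι] [Fintype κ] {q : ℝ} (hp0 : 0 ≤ p) (hp1 : p ≤ 1)
    (hq0 : 0 ≤ q) (hq1 : q ≤ 1) (ω : (ι → Bool) × (κ → Bool)) : 0 ≤ noiseWeight p q ω :=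
  mul_nonneg (flipWeight_nonneg hp0 hp1 _) (flipWeight_nonneg hq0 hq1 _)

end FlipPatterns

lemma sum_le_add_of_pairing {Ω : Type*} [Fintype Ω] {w f g : Ω → ℝ} (φ : Ω → Ω) (E : Finset Ω)
    (hw : ∀ ω, 0 ≤ w ω) (hf : ∀ ω, 0 ≤ f ω) (hg : ∀ ω, 0 ≤ g ω)
    (hwφ : ∀ ω ∈ E, w ω ≤ w (φ ω)) (hfg : ∀ ω ∈ E, 1 ≤ f ω + g ω) :
    ∑ ω ∈ E, w ω ≤ ∑ ω, w ω * f ω + ∑ ω, w (φ ω) * g ω := by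
  calc ∑ ω ∈ E, w ω ≤ ∑ ω ∈ E, (w ω * f ω + w (φ ω) * g ω) := by
        refine sum_le_sum fun ω hω => ?_
        have := mul_le_mul_of_nonneg_right (hwφ ω hω) (hg ω)
        nlinarith [hw ω, hfg ω hω]
    _ ≤ _ := by
        rw [sum_add_distrib]
        exact add_le_add (sum_le_univ_sum_of_nonneg fun ω => mul_nonneg (hw ω) (hf ω))
          (sum_le_univ_sum_of_nonneg fun ω => mul_nonneg (hw (φ ω)) (hg ω))

lemma pairProd_update_neg {W : Type*} [DecidableEq W] (y : W → ℤ) (u : W) {e : Sym2 W}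
    (he : ¬e.IsDiag) :
    pairProd (Function.update y u (-y u)) e = (if u ∈ e then -1 else 1) * pairProd y e := by
  induction e using Sym2.ind with
  | _ a b =>
    rw [Sym2.mk_isDiag_iff] at he
    by_cases ha : u = a <;> by_cases hb : u = b
    · exact absurd (ha.symm.trans hb) he
    all_goals simp [pairProd, Function.update_apply, ha, hb, he, eq_comm]

def observe {W : Type*} (G : SimpleGraph W) (y : W → ℤ) (ω : (G.edgeSet → Bool) × (W → Bool)) :
    (G.edgeSet → ℤ) × (W → ℤ) :=
  (fun e => (if ω.1 e then -1 else 1) * pairProd y e.val, fun v => (if ω.2 v then -1 else 1) * y v)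

section Observations

variable (G : SimpleGraph V) [DecidableRel G.Adj]

def incidentEdges (u : V) : Finset G.edgeSet := {e | u ∈ (e : Sym2 V)}

lemma card_incidentEdges (u : V) : #(incidentEdges G u) = G.degree u := by
  rw [← G.card_incidenceFinset_eq_degree, ← card_map (Function.Embedding.subtype _)]
  congr 1
  ext e
  simp [incidentEdges, SimpleGraph.incidenceSet, and_comm]

variable {G} {p q : ℝ}

lemma expVal_eq_sum (y : V → ℤ) (f : (G.edgeSet → ℤ) × (V → ℤ) → ℝ) :
    expVal G p q y f = ∑ ω, noiseWeight p q ω * f (observe G y ω) := by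
  rw [Fintype.sum_prod_type]; rfl

lemma expVal_mono (hp0 : 0 ≤ p) (hp1 : p ≤ 1) (hq0 : 0 ≤ q) (hq1 : q ≤ 1) (y : V → ℤ)
    {f g : (G.edgeSet → ℤ) × (V → ℤ) → ℝ} (h : ∀ X, f X ≤ g X) :
    expVal G p q y f ≤ expVal G p q y g := by
  simp only [expVal_eq_sum]
  exact sum_le_sum fun ω _ =>
    mul_le_mul_of_nonneg_left (h _) (noiseWeight_nonneg hp0 hp1 hq0 hq1 ω)

lemma sum_expVal {ι : Type*} (s : Finset ι) (y : V → ℤ) (f : ι → (G.edgeSet → ℤ) × (V → ℤ) → ℝ) :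
    ∑ i ∈ s, expVal G p q y (f i) = expVal G p q y (fun X => ∑ i ∈ s, f i X) := by
  simp only [expVal_eq_sum, mul_sum]
  exact sum_comm

lemma observe_update_neg (y : V → ℤ) (u : V) (ω : (G.edgeSet → Bool) × (V → Bool)) :
    observe G (Function.update y u (-y u)) (toggle (incidentEdges G u) ω.1, toggle {u} ω.2) =
      observe G y ω := by
  refine Prod.ext (funext fun e => ?_) (funext fun v => ?_)
  · simp only [observe, pairProd_update_neg y u (G.not_isDiag_of_mem_edgeSet e.2)]
    by_cases hu : u ∈ (e : Sym2 V) <;> cases h : ω.1 e <;> simp [toggle, incidentEdges, hu, h]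
  · by_cases hv : v = u
    · subst hv; cases h : ω.2 v <;> simp [observe, toggle, h]
    · cases h : ω.2 v <;> simp [observe, toggle, hv, h]

end Observations

theorem le_expVal_misclassified_add (G : SimpleGraph V) [DecidableRel G.Adj] {p q : ℝ}
    (hp0 : 0 ≤ p) (hp1 : p ≤ 1) (hq0 : 0 ≤ q) (hq : q ≤ 1 / 2) {u : V} {k : ℕ}
    (hdeg : G.degree u = 2 * k) {y : V → ℤ} (hy : y u ≠ 0)
    (A : (G.edgeSet → ℤ) × (V → ℤ) → (V → ℤ)) :
    q * (p * (1 - p)) ^ k ≤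
      expVal G p q y (fun X => if A X u ≠ y u then 1 else 0) +
        expVal G p q (Function.update y u (-y u)) (fun X => if A X u ≠ -y u then 1 else 0) := by
  obtain ⟨S, hST, hS⟩ := exists_subset_card_eq (s := incidentEdges G u) (n := k)
    (by rw [card_incidentEdges, hdeg]; omega)
  have hT : #(incidentEdges G u) = 2 * #S := by rw [card_incidentEdges, hdeg, hS]
  let φ : (G.edgeSet → Bool) × (V → Bool) → (G.edgeSet → Bool) × (V → Bool) :=
    fun ω => (toggle (incidentEdges G u) ω.1, toggle {u} ω.2)
  have hφ : Function.Involutive φ := fun ω =>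
    Prod.ext (toggle_involutive _ ω.1) (toggle_involutive _ ω.2)
  let E := ({fE | ∀ e ∈ incidentEdges G u, fE e = decide (e ∈ S)} : Finset (G.edgeSet → Bool)) ×ˢ
    ({fV | ∀ v ∈ ({u} : Finset V), fV v = true} : Finset (V → Bool))
  have hE : ∑ ω ∈ E, noiseWeight p q ω = q * (p * (1 - p)) ^ k := by
    rw [sum_product]
    simp only [noiseWeight]
    rw [← sum_mul_sum, sum_flipWeight_eqOn, sum_flipWeight_eqOn,
      prod_flipProb_mem_of_card_eq_two_mul hST hT, prod_singleton, hS]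
    simp only [flipProb, if_true]
    ring
  have hwφ : ∀ ω ∈ E, noiseWeight p q ω ≤ noiseWeight p q (φ ω) := by
    intro ω hω
    simp only [E, mem_product, mem_filter, mem_univ, true_and] at hω
    have h_edges : ∀ r, ∏ e ∈ incidentEdges G u, flipProb r (ω.1 e) = (r * (1 - r)) ^ #S :=
      fun r => by
        rw [prod_congr rfl fun e he => congrArg (flipProb r) (hω.1 e he),
          prod_flipProb_mem_of_card_eq_two_mul hST hT]
    refine mul_le_mul (flipWeight_le_flipWeight_toggle hp0 hp1 (le_of_eq ?_))
      (flipWeight_le_flipWeight_toggle hq0 (by linarith) ?_)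
      (flipWeight_nonneg hq0 (by linarith) _) (flipWeight_nonneg hp0 hp1 _)
    · simp only [flipProb_not, h_edges]
      ring
    · simp [hω.2, flipProb]
      linarith
  have hfg : ∀ ω ∈ E, 1 ≤ (if A (observe G y ω) u ≠ y u then (1 : ℝ) else 0) +
      (if A (observe G y ω) u ≠ -y u then 1 else 0) := by
    intro ω _
    have : y u ≠ -y u := by omega
    split_ifs <;> simp_all
  calc q * (p * (1 - p)) ^ k = ∑ ω ∈ E, noiseWeight p q ω := hE.symm
    _ ≤ _ := sum_le_add_of_pairing φ E (noiseWeight_nonneg hp0 hp1 hq0 (by linarith))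
          (fun _ => by split_ifs <;> norm_num) (fun _ => by split_ifs <;> norm_num) hwφ hfg
    _ = _ := by
        congr 1
        · rw [expVal_eq_sum]
        · refine (Fintype.sum_equiv (hφ.toPerm φ) _ _ fun ω => ?_).trans (expVal_eq_sum _ _).symm
          simp only [Function.Involutive.coe_toPerm, φ, observe_update_neg]

section RandomSigns

variable {W : Type*}

def signOf (s : W → Bool) : W → ℤ := fun v => if s v then -1 else 1

lemma isSign_signOf (s : W → Bool) (v : W) : IsSign (signOf s v) := by
  unfold signOf IsSign; split <;> simp

lemma signOf_ne_zero (s : W → Bool) (v : W) : signOf s v ≠ 0 := by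
  unfold signOf; split <;> simp

lemma signOf_toggle_singleton [DecidableEq W] (s : W → Bool) (u : W) :
    signOf (toggle {u} s) = Function.update (signOf s) u (-signOf s u) := by
  funext v
  by_cases hv : v = u
  · subst hv; cases h : s v <;> simp [signOf, toggle, h]
  · simp [signOf, toggle, hv]

lemma exists_le_sum_of_le_add_toggle [Fintype W] [DecidableEq W] (F : (W → Bool) → W → ℝ)
    (I : Finset W) (B : ℝ)
    (h : ∀ s, ∀ u ∈ I, B ≤ F s u + F (toggle {u} s) u) :
    ∃ s, #I * B / 2 ≤ ∑ u ∈ I, F s u := by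
  have h_vertex : ∀ u ∈ I, ∑ _s : W → Bool, B / 2 ≤ ∑ s, F s u := by
    intro u hu
    have h_sum := sum_le_sum fun s (_ : s ∈ univ) => h s u hu
    have h_flip : ∑ s, F (toggle {u} s) u = ∑ s, F s u :=
      Fintype.sum_equiv ((toggle_involutive {u}).toPerm _) _ _ fun _ => rfl
    rw [sum_add_distrib, h_flip] at h_sum
    rw [← sum_div]
    linarith
  have h_total : ∑ _s : W → Bool, (#I * B / 2) ≤ ∑ s, ∑ u ∈ I, F s u := by
    rw [sum_comm]
    calc ∑ _s : W → Bool, (#I * B / 2) = ∑ u ∈ I, ∑ _s : W → Bool, B / 2 := by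
          simp only [sum_const, card_univ, nsmul_eq_mul]; ring
      _ ≤ _ := sum_le_sum h_vertex
  obtain ⟨s, -, hs⟩ := exists_le_of_sum_le univ_nonempty h_total
  exact ⟨s, hs⟩

end RandomSigns

lemma sum_ne_le_hamming {W : Type*} [Fintype W] (I : Finset W) (Yh y : W → ℤ) :
    ∑ u ∈ I, (if Yh u ≠ y u then (1 : ℝ) else 0) ≤ hamming Yh y := by
  rw [sum_boole, hamming]
  exact_mod_cast card_le_card (filter_subset_filter _ (subset_univ I))

section Grid

def gridInteriorCoord (n : ℕ) : Finset (Fin n) := {i | 0 < i.val ∧ i.val + 1 < n}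

def gridInterior (n : ℕ) : Finset (Fin n × Fin n) := gridInteriorCoord n ×ˢ gridInteriorCoord n

lemma card_gridInteriorCoord (n : ℕ) : #(gridInteriorCoord n) = n - 2 := by
  have h : (gridInteriorCoord n).map Fin.valEmbedding = Ioo 0 (n - 1) := by
    ext k
    simp only [gridInteriorCoord, mem_map, mem_filter, mem_univ, true_and, Fin.valEmbedding_apply,
      mem_Ioo]
    exact ⟨fun ⟨i, hi, hik⟩ => by omega, fun hk => ⟨⟨k, by omega⟩, by simp; omega⟩⟩
  rw [← card_map Fin.valEmbedding, h, Nat.card_Ioo]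
  omega

lemma sq_div_four_le_card_gridInterior {n : ℕ} (hn : 4 ≤ n) :
    (n : ℝ) ^ 2 / 4 ≤ #(gridInterior n) := by
  rw [gridInterior, card_product, card_gridInteriorCoord]
  push_cast [Nat.cast_sub (by omega : 2 ≤ n)]
  have : (4 : ℝ) ≤ n := by exact_mod_cast hn
  nlinarith

lemma gridGraph_degree_of_mem_gridInterior {n : ℕ} {u : Fin n × Fin n} (hu : u ∈ gridInterior n) :
    (gridGraph n).degree u = 4 := by
  obtain ⟨i, j⟩ := u
  simp only [gridInterior, gridInteriorCoord, mem_product, mem_filter, mem_univ, true_and] at hu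
  obtain ⟨⟨hi0, hi1⟩, hj0, hj1⟩ := hu
  have h_nbrs : (gridGraph n).neighborFinset (i, j) =
      {(⟨i.val - 1, by omega⟩, j), (⟨i.val + 1, hi1⟩, j), (i, ⟨j.val - 1, by omega⟩),
        (i, ⟨j.val + 1, hj1⟩)} := by
    ext ⟨a, b⟩
    rw [SimpleGraph.mem_neighborFinset]
    simp only [gridGraph, mem_insert, mem_singleton, Prod.mk.injEq, Fin.ext_iff, Nat.dist]
    omega
  rw [← SimpleGraph.card_neighborFinset_eq_degree, h_nbrs]
  rw [card_insert_of_notMem, card_insert_of_notMem, card_pair] <;> simp [Fin.ext_iff]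
  omega

end Grid

/-- lower bound for grids: for every node noise `q ∈ (0, 1/2]` there is a
constant `c > 0` such that for every edge noise `p ∈ (0, 0.078]` there is `N₀` such that
for all `n` with `n² ≥ N₀` and every algorithm `A` mapping observations to labelings,
some ground truth forces expected Hamming error at least `c p² n²`. -/
theorem grid_expected_error_lower_bound :
    ∀ q : ℝ, 0 < q → q ≤ 1/2 →
    ∃ c : ℝ, 0 < c ∧
      ∀ p : ℝ, 0 < p → p ≤ 0.078 →
      ∃ N₀ : ℕ, ∀ n : ℕ, N₀ ≤ n^2 →
      ∀ A : (((gridGraph n).edgeSet → ℤ) × (Fin n × Fin n → ℤ)) → (Fin n × Fin n → ℤ),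
      (∀ X v, IsSign (A X v)) →
      ∃ y : Fin n × Fin n → ℤ, (∀ v, IsSign (y v)) ∧
        c * p^2 * (n : ℝ)^2 ≤
          expVal (gridGraph n) p q y (fun X => (hamming (A X) y : ℝ)) := by
  intro q hq0 hq1
  refine ⟨q / 16, by positivity, fun p hp0 hp1 => ⟨16, fun n hn A _ => ?_⟩⟩
  have hn4 : 4 ≤ n := by nlinarith
  obtain ⟨s, hs⟩ := exists_le_sum_of_le_add_toggle
    (fun s u => expVal (gridGraph n) p q (signOf s) (fun X => if A X u ≠ signOf s u then 1 else 0))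
    (gridInterior n) (q * (p * (1 - p)) ^ 2) fun s u hu => by
      simpa only [signOf_toggle_singleton, Function.update_self] using
        le_expVal_misclassified_add (gridGraph n) hp0.le (by linarith) hq0.le hq1
          (gridGraph_degree_of_mem_gridInterior hu) (signOf_ne_zero s u) A
  refine ⟨signOf s, isSign_signOf s, ?_⟩
  have h_card := sq_div_four_le_card_gridInterior hn4
  have h_p : 1 / 2 ≤ (1 - p) ^ 2 := by nlinarith
  calc q / 16 * p ^ 2 * n ^ 2 = n ^ 2 / 4 * (q * p ^ 2 * (1 / 2)) / 2 := by ring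
    _ ≤ #(gridInterior n) * (q * p ^ 2 * (1 - p) ^ 2) / 2 := by gcongr
    _ = #(gridInterior n) * (q * (p * (1 - p)) ^ 2) / 2 := by ring
    _ ≤ _ := hs
    _ = _ := sum_expVal _ _ _
    _ ≤ _ := expVal_mono hp0.le (by linarith) hq0.le (by linarith) _ fun X =>
        sum_ne_le_hamming _ _ _
end
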